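/- Let F be submodular with F(∅)=0. Then for all w ∈ ℝ^p, max over s ∈ B(F) of w^T s equals f(w); and if some coordinate w_j < 0, then sup over s ∈ P(F) of w^T s = +∞. -/

import Mathlib

/-- The Lovász extension of a set-function `F`, defined via a nondecreasing
ordering `σ = Tuple.sort w` of the components of `w`. -/
noncomputable def lovasz {p : ℕ} (F : Finset (Fin p) → ℝ) (w : Fin p → ℝ) : ℝ :=
  ∑ k : Fin p, w (Tuple.sort w k) *
    (F ((Finset.Ici k).image (Tuple.sort w)) - F ((Finset.Ioi k).image (Tuple.sort w)))

def Submodular {p : ℕ} (F : Finset (Fin p) → ℝ) : Prop :=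
  ∀ A B : Finset (Fin p), F (A ∪ B) + F (A ∩ B) ≤ F A + F B

def MemP {p : ℕ} (F : Finset (Fin p) → ℝ) (s : Fin p → ℝ) : Prop :=
  ∀ A : Finset (Fin p), ∑ k ∈ A, s k ≤ F A

def MemB {p : ℕ} (F : Finset (Fin p) → ℝ) (s : Fin p → ℝ) : Prop :=
  MemP F s ∧ ∑ k, s k = F Finset.univ

/-!
Sort the coordinates of `w` increasingly by a permutation `σ` and let `S k = σ {k, …, p-1}`.
The greedy vector `s(σ k) = F (S k) - F (S (k+1))` (`marginals σ F`) lies in `B(F)`: by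
submodularity its sum over any `A` is dominated by the telescoping sum of the increments of
`F (A ∩ S k)`, which is `F A`. Its value `wᵀs` is the Lovász extension by definition. For any
other `s ∈ B(F)`, summation by parts writes `f(w) - wᵀs` as a sum of the nonnegative slacks
`F (S k) - s(S k)` with the nonnegative weights `w (σ k) - w (σ (k-1))`; the boundary terms vanish
since the slack is zero at `S 0 = univ` and at `S p = ∅`. Finally `P(F)` is nonempty and closed
downwards, so lowering a coordinate `s j` with `w j < 0` increases `wᵀs` without bound.
-/

open Finset

theorem Finset.sum_range_mul_sub_succ_nonneg {a D : ℕ → ℝ} {n : ℕ} (ha : Monotone a)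
    (hD : ∀ k, 0 ≤ D k) (h0 : D 0 = 0) (hn : D n = 0) :
    0 ≤ ∑ k ∈ range n, a k * (D k - D (k + 1)) := by
  have := sum_range_by_parts a (fun k => D k - D (k + 1)) n
  simp only [smul_eq_mul, sum_range_sub', h0, hn, zero_sub, mul_neg, sub_self, mul_zero,
    sum_neg_distrib, neg_neg] at this
  rw [this]
  exact sum_nonneg fun i _ => mul_nonneg (sub_nonneg.2 (ha i.le_succ)) (hD _)

section Chain

variable {p : ℕ} (σ : Equiv.Perm (Fin p))

def tailSet (n : ℕ) : Finset (Fin p) :=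
  univ.filter fun i => n ≤ (σ.symm i : ℕ)

variable {σ} in
@[simp]
theorem mem_tailSet {n : ℕ} {i : Fin p} : i ∈ tailSet σ n ↔ n ≤ (σ.symm i : ℕ) := by
  simp [tailSet]

@[simp]
theorem tailSet_zero : tailSet σ 0 = univ := by
  ext; simp

theorem tailSet_of_le {n : ℕ} (hn : p ≤ n) : tailSet σ n = ∅ := by
  ext i
  simpa using (σ.symm i).isLt.trans_le hn

theorem tailSet_eq_insert (k : Fin p) : tailSet σ k = insert (σ k) (tailSet σ (k + 1)) := by
  ext i
  rw [mem_insert, mem_tailSet, mem_tailSet, ← σ.symm_apply_eq, eq_comm, Fin.ext_iff]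
  omega

theorem apply_notMem_tailSet_succ (k : Fin p) : σ k ∉ tailSet σ (k + 1) := by
  simp

theorem image_Ici_eq_tailSet (k : Fin p) : (Ici k).image σ = tailSet σ k := by
  ext i
  simp only [mem_image, mem_Ici, ← σ.eq_symm_apply, exists_eq_right, mem_tailSet,
    Fin.le_def]

theorem image_Ioi_eq_tailSet (k : Fin p) : (Ioi k).image σ = tailSet σ (k + 1) := by
  ext i
  simp only [mem_image, mem_Ioi, ← σ.eq_symm_apply, exists_eq_right, mem_tailSet,
    Fin.lt_def, Nat.succ_le_iff]

def marginals (h : Finset (Fin p) → ℝ) (i : Fin p) : ℝ :=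
  h (tailSet σ (σ.symm i)) - h (tailSet σ (σ.symm i + 1))

@[simp]
theorem marginals_apply_perm (h : Finset (Fin p) → ℝ) (k : Fin p) :
    marginals σ h (σ k) = h (tailSet σ k) - h (tailSet σ (k + 1)) := by
  simp [marginals]

theorem sum_marginals (h : Finset (Fin p) → ℝ) : ∑ i, marginals σ h i = h univ - h ∅ := by
  rw [← Equiv.sum_comp σ]
  simp only [marginals_apply_perm]
  rw [Fin.sum_univ_eq_sum_range (fun n => h (tailSet σ n) - h (tailSet σ (n + 1))),
    sum_range_sub', tailSet_zero, tailSet_of_le σ le_rfl]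

theorem marginals_sub (h g : Finset (Fin p) → ℝ) :
    marginals σ (h - g) = marginals σ h - marginals σ g := by
  ext i
  simp only [marginals, Pi.sub_apply]
  ring

theorem marginals_sum (s : Fin p → ℝ) : marginals σ (fun A => ∑ i ∈ A, s i) = s := by
  ext i
  obtain ⟨k, rfl⟩ := σ.surjective i
  rw [marginals_apply_perm, tailSet_eq_insert, sum_insert (apply_notMem_tailSet_succ σ k),
    add_sub_cancel_right]

theorem marginals_inter_eq_zero (h : Finset (Fin p) → ℝ) {A : Finset (Fin p)} {i : Fin p}
    (hi : i ∉ A) : marginals σ (fun B => h (A ∩ B)) i = 0 := by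
  obtain ⟨k, rfl⟩ := σ.surjective i
  rw [marginals_apply_perm, tailSet_eq_insert, inter_insert_of_notMem hi, sub_self]

theorem Submodular.marginals_le_marginals_inter {F : Finset (Fin p) → ℝ} (hF : Submodular F)
    {A : Finset (Fin p)} {i : Fin p} (hi : i ∈ A) :
    marginals σ F i ≤ marginals σ (fun B => F (A ∩ B)) i := by
  obtain ⟨k, rfl⟩ := σ.surjective i
  have hsub : tailSet σ (k + 1) ⊆ tailSet σ k := by
    rw [tailSet_eq_insert σ k]; exact subset_insert _ _
  have hunion : A ∩ tailSet σ k ∪ tailSet σ (k + 1) = tailSet σ k := by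
    rw [tailSet_eq_insert σ k, inter_insert_of_mem hi, insert_union,
      union_eq_right.2 inter_subset_right]
  have hinter : A ∩ tailSet σ k ∩ tailSet σ (k + 1) = A ∩ tailSet σ (k + 1) := by
    rw [inter_assoc, inter_eq_right.2 hsub]
  have := hF (A ∩ tailSet σ k) (tailSet σ (k + 1))
  rw [hunion, hinter] at this
  simp only [marginals_apply_perm]
  linarith

theorem Submodular.marginals_memB {F : Finset (Fin p) → ℝ} (hF : Submodular F) (h0 : F ∅ = 0) :
    MemB F (marginals σ F) := by
  refine ⟨fun A => ?_, by rw [sum_marginals, h0, sub_zero]⟩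
  calc ∑ i ∈ A, marginals σ F i
      ≤ ∑ i ∈ A, marginals σ (fun B => F (A ∩ B)) i :=
        sum_le_sum fun i hi => hF.marginals_le_marginals_inter σ hi
    _ = ∑ i, marginals σ (fun B => F (A ∩ B)) i :=
        sum_subset (subset_univ A) fun i _ hi => marginals_inter_eq_zero σ _ hi
    _ = F A := by rw [sum_marginals, inter_univ, inter_empty, h0, sub_zero]

theorem sum_mul_marginals_nonneg {w : Fin p → ℝ} (hw : Monotone (w ∘ σ))
    {h : Finset (Fin p) → ℝ} (hh : ∀ A, 0 ≤ h A) (huniv : h univ = 0) (hempty : h ∅ = 0) :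
    0 ≤ ∑ i, w i * marginals σ h i := by
  rcases Nat.eq_zero_or_pos p with rfl | hp
  · simp
  set a : ℕ → ℝ := fun n => w (σ ⟨min n (p - 1), by omega⟩)
  have ha : Monotone a := fun m n hmn => hw (Fin.mk_le_mk.2 (min_le_min_right _ hmn))
  have hak (k : Fin p) : a k = w (σ k) := by
    simp only [a]; congr; omega
  rw [← Equiv.sum_comp σ]
  simp only [marginals_apply_perm, ← hak]
  rw [Fin.sum_univ_eq_sum_range (fun n => a n * (h (tailSet σ n) - h (tailSet σ (n + 1))))]
  exact sum_range_mul_sub_succ_nonneg ha (fun _ => hh _) (by rw [tailSet_zero, huniv])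
    (by rw [tailSet_of_le σ le_rfl, hempty])

end Chain

theorem lovasz_eq_sum_mul_marginals {p : ℕ} (F : Finset (Fin p) → ℝ) (w : Fin p → ℝ) :
    lovasz F w = ∑ i, w i * marginals (Tuple.sort w) F i := by
  rw [← Equiv.sum_comp (Tuple.sort w)]
  simp only [lovasz, marginals_apply_perm, image_Ici_eq_tailSet, image_Ioi_eq_tailSet]

theorem sum_mul_le_lovasz {p : ℕ} {F : Finset (Fin p) → ℝ} (h0 : F ∅ = 0) (w : Fin p → ℝ)
    {s : Fin p → ℝ} (hs : MemB F s) : ∑ i, w i * s i ≤ lovasz F w := by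
  have hslack := sum_mul_marginals_nonneg (Tuple.sort w) (Tuple.monotone_sort w)
    (h := F - fun A => ∑ i ∈ A, s i) (fun A => sub_nonneg.2 (hs.1 A))
    (by simp [hs.2]) (by simp [h0])
  rw [marginals_sub, marginals_sum] at hslack
  simp only [Pi.sub_apply, mul_sub, sum_sub_distrib, sub_nonneg] at hslack
  rwa [lovasz_eq_sum_mul_marginals]

theorem MemP.of_le {p : ℕ} {F : Finset (Fin p) → ℝ} {s t : Fin p → ℝ} (hs : MemP F s)
    (hts : t ≤ s) : MemP F t :=
  fun A => (sum_le_sum fun i _ => hts i).trans (hs A)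

theorem not_bddAbove_sum_mul_of_memP {p : ℕ} {F : Finset (Fin p) → ℝ} {s : Fin p → ℝ}
    (hs : MemP F s) {w : Fin p → ℝ} {j : Fin p} (hj : w j < 0) :
    ¬ BddAbove {x : ℝ | ∃ s : Fin p → ℝ, MemP F s ∧ x = ∑ i, w i * s i} := by
  rintro ⟨M, hM⟩
  set b := ∑ i, w i * s i
  set t := (|M - b| + 1) / -w j
  have ht : 0 ≤ t := div_nonneg (by positivity) (by linarith)
  have hle := hM ⟨s - Pi.single j t, hs.of_le (sub_le_self _ (Pi.single_nonneg.2 ht)), rfl⟩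
  have hval : ∑ i, w i * (s - Pi.single j t : Fin p → ℝ) i = b + (|M - b| + 1) := by
    have hwt : w j * t = -(|M - b| + 1) := by
      simp only [t]
      field_simp [hj.ne]
    simp only [Pi.sub_apply, mul_sub, sum_sub_distrib, Pi.single_apply, mul_ite, mul_zero,
      sum_ite_eq', mem_univ, if_true, hwt, b]
    ring
  linarith [le_abs_self (M - b)]

/-- Support functions of the base and submodular polyhedra: the maximum of `wᵀ s`
over `B(F)` is the Lovász extension `f(w)`; and if some coordinate of `w` is
negative, `wᵀ s` is unbounded above over `P(F)`. -/
theorem support_functions {p : ℕ} (F : Finset (Fin p) → ℝ)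
    (hF : Submodular F) (h0 : F ∅ = 0) (w : Fin p → ℝ) :
    IsGreatest {x : ℝ | ∃ s : Fin p → ℝ, MemB F s ∧ x = ∑ i, w i * s i}
        (lovasz F w) ∧
      ((∃ j, w j < 0) →
        ¬ BddAbove {x : ℝ | ∃ s : Fin p → ℝ, MemP F s ∧ x = ∑ i, w i * s i}) := by
  have hgreedy := hF.marginals_memB (Tuple.sort w) h0
  refine ⟨⟨⟨_, hgreedy, lovasz_eq_sum_mul_marginals F w⟩, ?_⟩, fun ⟨j, hj⟩ => ?_⟩
  · rintro x ⟨s, hs, rfl⟩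
    exact sum_mul_le_lovasz h0 w hs
  · exact not_bddAbove_sum_mul_of_memP hgreedy.1 hj
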